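/- arXiv:2007.09340 — 2 statements merged into one kernel-verified Lean document; each statement's English description precedes it below -/
import Mathlib

section
/- If a timed language L is both S-invariant and S'-invariant for finite subsets S, S' ⊆ ℝ≥0, then L is S''-invariant where S'' = frac(S) ∩ frac(S') is the intersection of the sets of fractional parts of S and S'. -/
/-- A timed automorphism: a monotone bijection `π : ℝ → ℝ` with `π (x+1) = π x + 1`. -/
def IsTimedAutomorphism (π : ℝ → ℝ) : Prop :=
  Function.Bijective π ∧ StrictMono π ∧ ∀ x : ℝ, π (x + 1) = π x + 1

/-- An `S`-timed automorphism: a timed automorphism fixing every point of `S`. -/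
def IsSTimedAutomorphism (S : Set ℝ) (π : ℝ → ℝ) : Prop :=
  IsTimedAutomorphism π ∧ ∀ t ∈ S, π t = t

/-- A timed word: a finite sequence of letters with nonnegative, nondecreasing timestamps. -/
def IsTimedWord {A : Type*} (w : List (A × ℝ)) : Prop :=
  (∀ p ∈ w, 0 ≤ p.2) ∧ (w.map Prod.snd).Chain' (· ≤ ·)

/-- Pointwise action of a real function on the timestamps of a timed word. -/
def mapTW {A : Type*} (π : ℝ → ℝ) (w : List (A × ℝ)) : List (A × ℝ) :=
  w.map fun p => (p.1, π p.2)

/-- `S`-invariance of a timed language: every `S`-timed automorphism preserves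
membership (on timed words whose image is again a timed word). -/
def SInvariantLang {A : Type*} (S : Set ℝ) (L : Set (List (A × ℝ))) : Prop :=
  ∀ π, IsSTimedAutomorphism S π → ∀ w, IsTimedWord w → IsTimedWord (mapTW π w) →
    (w ∈ L ↔ mapTW π w ∈ L)

/-! The straight-line homotopy `x ↦ x + s (π x - x)`, `s ∈ [0, 1]`, joins the identity to `π`
through timed automorphisms fixing `frac S ∩ frac S'`, so it suffices to treat such automorphisms
`g` that move no point by more than a small `ε`. Such a `g` factors as `τ ∘ σ` with `σ` fixing `S`
and `τ` fixing `S'`: `τ` is the identity plus a sum of small periodic tents, chosen so that `τ = g`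
on `frac S` and `τ = id` on the rest of `frac S' ∪ {0}`, and `σ = τ⁻¹ ∘ g`. Because `σ 0 = 0` or
`τ 0 = 0`, the intermediate word `σ u` has nonnegative timestamps. -/

open Function Set

section Displacement

variable {f : ℝ → ℝ}

lemma periodic_sub_id (hf : ∀ x, f (x + 1) = f x + 1) : Periodic (fun x => f x - x) 1 :=
  fun x => by simp only [hf]; ring

lemma map_add_intCast_of_map_add_one (hf : ∀ x, f (x + 1) = f x + 1) (x : ℝ) (n : ℤ) :
    f (x + n) = f x + n := by
  have := (periodic_sub_id hf).int_mul n x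
  simp only [mul_one] at this
  linarith

lemma exists_abs_sub_le_of_continuous (hcont : Continuous f) (hf : ∀ x, f (x + 1) = f x + 1) :
    ∃ C, ∀ x, |f x - x| ≤ C := by
  obtain ⟨C, hC⟩ := isBounded_iff_forall_norm_le.1
    ((periodic_sub_id hf).isBounded_of_continuous one_ne_zero (hcont.sub continuous_id))
  exact ⟨C, fun x => hC _ (mem_range_self x)⟩

lemma isTimedAutomorphism_of_strictMono_of_continuous (hmono : StrictMono f)
    (hcont : Continuous f) (hf : ∀ x, f (x + 1) = f x + 1) : IsTimedAutomorphism f := by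
  obtain ⟨C, hC⟩ := exists_abs_sub_le_of_continuous hcont hf
  have hsurj : Surjective f := hcont.surjective
    (Filter.tendsto_atTop_mono (fun x => by simp only [id]; linarith [(abs_le.1 (hC x)).1])
      (Filter.tendsto_atTop_add_const_right _ (-C) Filter.tendsto_id))
    (Filter.tendsto_atBot_mono (fun x => by simp only [id]; linarith [(abs_le.1 (hC x)).2])
      (Filter.tendsto_atBot_add_const_right _ C Filter.tendsto_id))
  exact ⟨⟨hmono.injective, hsurj⟩, hmono, hf⟩

lemma isTimedAutomorphism_id_add {d : ℝ → ℝ} {K : NNReal} (hd : ContractingWith K d)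
    (hper : Periodic d 1) : IsTimedAutomorphism (fun x => x + d x) := by
  refine isTimedAutomorphism_of_strictMono_of_continuous (fun x y hxy => ?_)
    (continuous_id.add hd.2.continuous) (fun x => by simp only [hper x]; ring)
  have hK : (K : ℝ) < 1 := hd.1
  have hlip := hd.2.dist_le_mul y x
  rw [Real.dist_eq, Real.dist_eq, abs_of_pos (sub_pos.2 hxy)] at hlip
  nlinarith [le_abs_self (d y - d x), neg_abs_le (d y - d x)]

end Displacement

namespace IsTimedAutomorphism

variable {π ρ : ℝ → ℝ}

lemma continuous (hπ : IsTimedAutomorphism π) : Continuous π :=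
  hπ.2.1.monotone.continuous_of_surjective hπ.1.2

lemma map_fract (hπ : IsTimedAutomorphism π) (x : ℝ) : π (Int.fract x) = π x - ⌊x⌋ := by
  rw [Int.fract, sub_eq_add_neg, ← Int.cast_neg, map_add_intCast_of_map_add_one hπ.2.2]
  push_cast
  ring

lemma comp (hπ : IsTimedAutomorphism π) (hρ : IsTimedAutomorphism ρ) :
    IsTimedAutomorphism (π ∘ ρ) :=
  ⟨hπ.1.comp hρ.1, hπ.2.1.comp hρ.2.1, fun x => by simp only [comp_apply, hρ.2.2, hπ.2.2]⟩

noncomputable def toOrderIso (hπ : IsTimedAutomorphism π) : ℝ ≃o ℝ :=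
  StrictMono.orderIsoOfSurjective π hπ.2.1 hπ.1.2

@[simp]
lemma coe_toOrderIso (hπ : IsTimedAutomorphism π) : ⇑hπ.toOrderIso = π := rfl

lemma symm (hπ : IsTimedAutomorphism π) : IsTimedAutomorphism hπ.toOrderIso.symm :=
  ⟨hπ.toOrderIso.symm.bijective, hπ.toOrderIso.symm.strictMono, fun x =>
    hπ.toOrderIso.injective <| by
      rw [OrderIso.apply_symm_apply, coe_toOrderIso, hπ.2.2,
        show π _ = x from hπ.toOrderIso.apply_symm_apply x]⟩

end IsTimedAutomorphism

lemma isSTimedAutomorphism_fract_image_iff {S : Set ℝ} {π : ℝ → ℝ} :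
    IsSTimedAutomorphism (Int.fract '' S) π ↔ IsSTimedAutomorphism S π := by
  refine and_congr_right fun hπ => ⟨fun h t ht => ?_, ?_⟩
  · have := h _ (mem_image_of_mem _ ht)
    rw [hπ.map_fract, Int.fract] at this
    linarith
  · rintro h _ ⟨t, ht, rfl⟩
    rw [hπ.map_fract, h t ht, Int.fract]

section TimedWords

variable {A : Type*} {f g : ℝ → ℝ} {w : List (A × ℝ)}

lemma mapTW_id : mapTW id w = w := by
  simp [mapTW]

lemma mapTW_comp : mapTW (f ∘ g) w = mapTW f (mapTW g w) := by
  simp [mapTW]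

lemma IsTimedWord.map_nonneg (h : IsTimedWord (mapTW f w)) {p : A × ℝ} (hp : p ∈ w) :
    0 ≤ f p.2 :=
  h.1 _ (List.mem_map_of_mem hp)

lemma IsTimedWord.mapTW_of_monotone (hw : IsTimedWord w) (hf : Monotone f)
    (h0 : ∀ p ∈ w, 0 ≤ f p.2) : IsTimedWord (mapTW f w) := by
  refine ⟨fun p hp => ?_, ?_⟩
  · obtain ⟨q, hq, rfl⟩ := List.mem_map.1 hp
    exact h0 q hq
  · rw [_root_.mapTW, List.map_map, show Prod.snd ∘ _ = f ∘ Prod.snd from rfl, ← List.map_map]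
    exact List.isChain_map_of_isChain f (fun _ _ h => hf h) hw.2

end TimedWords

section Composition

variable {A : Type*} {S S' : Set ℝ} {L : Set (List (A × ℝ))} {σ τ : ℝ → ℝ}

lemma SInvariantLang.mem_iff_mem_mapTW_comp (h1 : SInvariantLang S L) (h2 : SInvariantLang S' L)
    (hσ : IsSTimedAutomorphism S σ) (hτ : IsSTimedAutomorphism S' τ) (h0 : σ 0 = 0 ∨ τ 0 = 0)
    {u : List (A × ℝ)} (hu : IsTimedWord u) (hτσu : IsTimedWord (mapTW (τ ∘ σ) u)) :
    u ∈ L ↔ mapTW (τ ∘ σ) u ∈ L := by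
  have hσu : IsTimedWord (mapTW σ u) := by
    refine hu.mapTW_of_monotone hσ.1.2.1.monotone fun p hp => ?_
    rcases h0 with h0 | h0
    · exact h0 ▸ hσ.1.2.1.monotone (hu.1 p hp)
    · exact (hτ.1.2.1.le_iff_le (a := 0)).1 (by rw [h0]; exact hτσu.map_nonneg hp)
  rw [mapTW_comp] at hτσu ⊢
  exact (h1 σ hσ u hu hσu).trans (h2 τ hτ _ hσu hτσu)

end Composition

def lerpId (π : ℝ → ℝ) (s x : ℝ) : ℝ := x + s * (π x - x)

section Lerp

variable {π : ℝ → ℝ} {s t x : ℝ}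

lemma lerpId_zero : lerpId π 0 = id := funext fun x => by simp [lerpId]

lemma lerpId_one : lerpId π 1 = π := funext fun x => by simp [lerpId]

lemma lerpId_sub_lerpId : lerpId π t x - lerpId π s x = (t - s) * (π x - x) := by
  unfold lerpId; ring

lemma lerpId_eq_self (h : π x = x) : lerpId π s x = x := by
  simp [lerpId, h]

lemma lerpId_nonneg (hs : s ∈ Icc 0 1) (hx : 0 ≤ x) (hπx : 0 ≤ π x) : 0 ≤ lerpId π s x := by
  have : lerpId π s x = (1 - s) * x + s * π x := by unfold lerpId; ring
  rw [this]
  exact add_nonneg (mul_nonneg (sub_nonneg.2 hs.2) hx) (mul_nonneg hs.1 hπx)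

lemma IsTimedAutomorphism.lerpId (hπ : IsTimedAutomorphism π) (hs : s ∈ Icc 0 1) :
    IsTimedAutomorphism (lerpId π s) := by
  have := hπ.continuous
  refine isTimedAutomorphism_of_strictMono_of_continuous (fun x y hxy => ?_)
    (by unfold _root_.lerpId; fun_prop) (fun x => by simp only [_root_.lerpId, hπ.2.2]; ring)
  have hπxy := hπ.2.1 hxy
  unfold _root_.lerpId
  rcases hs.2.lt_or_eq with hs1 | rfl
  · nlinarith [mul_pos (sub_pos.2 hs1) (sub_pos.2 hxy), mul_nonneg hs.1 (sub_nonneg.2 hπxy.le)]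
  · linarith

lemma IsTimedWord.mapTW_lerpId {A : Type*} {w : List (A × ℝ)} (hπ : IsTimedAutomorphism π)
    (hs : s ∈ Icc 0 1) (hw : IsTimedWord w) (hπw : IsTimedWord (mapTW π w)) :
    IsTimedWord (mapTW (lerpId π s) w) :=
  hw.mapTW_of_monotone (hπ.lerpId hs).2.1.monotone fun p hp =>
    lerpId_nonneg hs (hw.1 p hp) (hπw.map_nonneg hp)

end Lerp

def LocallySInvariantLang {A : Type*} (S : Set ℝ) (ε : ℝ) (L : Set (List (A × ℝ))) : Prop :=
  ∀ g, IsSTimedAutomorphism S g → (∀ x, |g x - x| ≤ ε) →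
    ∀ w, IsTimedWord w → IsTimedWord (mapTW g w) → (w ∈ L ↔ mapTW g w ∈ L)

namespace LocallySInvariantLang

variable {A : Type*} {S : Set ℝ} {ε M : ℝ} {L : Set (List (A × ℝ))} {π : ℝ → ℝ}

lemma mem_mapTW_lerpId_iff (hL : LocallySInvariantLang S ε L) (hπ : IsSTimedAutomorphism S π)
    (hM : ∀ x, |π x - x| ≤ M) {s t : ℝ} (hs : s ∈ Icc 0 1) (ht : t ∈ Icc 0 1)
    (hst : |t - s| * M ≤ ε) {w : List (A × ℝ)} (hw : IsTimedWord w)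
    (hπw : IsTimedWord (mapTW π w)) :
    mapTW (lerpId π s) w ∈ L ↔ mapTW (lerpId π t) w ∈ L := by
  set e := (hπ.1.lerpId hs).toOrderIso
  have hgw : mapTW (lerpId π t ∘ e.symm) (mapTW (lerpId π s) w) = mapTW (lerpId π t) w := by
    rw [← mapTW_comp]
    congr 1
    funext x
    simp only [comp_apply]
    exact congrArg _ (e.symm_apply_apply x)
  have hg : IsSTimedAutomorphism S (lerpId π t ∘ e.symm) := by
    refine ⟨(hπ.1.lerpId ht).comp (hπ.1.lerpId hs).symm, fun x hx => ?_⟩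
    have hex : e.symm x = x := e.symm_apply_eq.2 (lerpId_eq_self (hπ.2 x hx)).symm
    simp only [comp_apply, hex, lerpId_eq_self (hπ.2 x hx)]
  have hgε : ∀ x, |(lerpId π t ∘ e.symm) x - x| ≤ ε := fun x => by
    obtain ⟨y, rfl⟩ := e.surjective x
    rw [comp_apply, e.symm_apply_apply, IsTimedAutomorphism.coe_toOrderIso, lerpId_sub_lerpId,
      abs_mul]
    exact (mul_le_mul_of_nonneg_left (hM _) (abs_nonneg _)).trans hst
  rw [← hgw]
  exact hL _ hg hgε _ (hw.mapTW_lerpId hπ.1 hs hπw) (hgw ▸ hw.mapTW_lerpId hπ.1 ht hπw)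

theorem sInvariantLang (hL : LocallySInvariantLang S ε L) (hε : 0 < ε) : SInvariantLang S L := by
  intro π hπ w hw hπw
  obtain ⟨M, hM⟩ := exists_abs_sub_le_of_continuous hπ.1.continuous hπ.1.2.2
  obtain ⟨n, hn⟩ := exists_nat_gt (M / ε)
  have hM0 : 0 ≤ M := (abs_nonneg _).trans (hM 0)
  have hn0 : (0 : ℝ) < n := (div_nonneg hM0 hε.le).trans_lt hn
  have hmem : ∀ i ≤ n, (i / n : ℝ) ∈ Icc 0 1 := fun i hi =>
    ⟨by positivity, div_le_one_of_le₀ (by exact_mod_cast hi) hn0.le⟩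
  have key : ∀ i ≤ n, (w ∈ L ↔ mapTW (lerpId π (i / n)) w ∈ L) := by
    intro i
    induction i with
    | zero => simp [lerpId_zero, mapTW_id]
    | succ i ih =>
      intro hi
      refine (ih (by omega)).trans (hL.mem_mapTW_lerpId_iff hπ hM (hmem i (by omega)) (hmem _ hi)
        ?_ hw hπw)
      rw [Nat.cast_succ, ← sub_div, add_sub_cancel_left, abs_of_pos (by positivity), one_div,
        inv_mul_le_iff₀ hn0]
      exact ((div_lt_iff₀ hε).1 hn).le
  simpa [hn0.ne', lerpId_one] using key n le_rfl

end LocallySInvariantLang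

lemma exists_pos_le_dist_of_finite {X : Type*} [MetricSpace X] {s : Set X} (hs : s.Finite) :
    ∃ δ > 0, ∀ x ∈ s, ∀ y ∈ s, x ≠ y → δ ≤ dist x y := by
  obtain ⟨C, hC, hsep⟩ := einfsep_pos.1 hs.einfsep_pos
  obtain ⟨δ, hδ0, hδ, hδC⟩ := ENNReal.lt_iff_exists_real_btwn.1 hC
  refine ⟨δ, ENNReal.ofReal_pos.1 hδ, fun x hx y hy hxy => ?_⟩
  rw [← ENNReal.ofReal_le_ofReal_iff dist_nonneg, ← edist_dist]
  exact hδC.le.trans (hsep x hx y hy hxy)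

lemma UnitAddCircle.dist_coe_le (x y : ℝ) :
    dist (x : UnitAddCircle) (y : UnitAddCircle) ≤ |x - y| := by
  rw [dist_eq_norm, ← AddCircle.coe_sub]
  exact QuotientAddGroup.norm_mk_le_norm

lemma injOn_coe_unitAddCircle_of_subset_Ico {F : Set ℝ} (hF : F ⊆ Ico 0 1) :
    InjOn ((↑) : ℝ → UnitAddCircle) F := fun _ hx _ hy h =>
  (AddCircle.coe_eq_coe_iff_of_mem_Ico (a := 0) (by simpa using hF hx) (by simpa using hF hy)).1 h

noncomputable def tent (δ p x : ℝ) : ℝ := max (1 - dist (x : UnitAddCircle) p / δ) 0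

section Tent

variable {δ : ℝ} (p : ℝ)

lemma tent_self : tent δ p p = 1 := by simp [tent]

lemma tent_eq_zero {x : ℝ} (hδ : 0 < δ) (h : δ ≤ dist (x : UnitAddCircle) p) : tent δ p x = 0 :=
  max_eq_right (by rw [sub_nonpos, le_div_iff₀ hδ, one_mul]; exact h)

lemma tent_add_one (x : ℝ) : tent δ p (x + 1) = tent δ p x := by
  simp only [tent, AddCircle.coe_add_period]

lemma abs_tent_sub_tent_le (hδ : 0 < δ) (x y : ℝ) : |tent δ p x - tent δ p y| ≤ |x - y| / δ := by
  refine (abs_max_sub_max_le_abs _ _ _).trans ?_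
  rw [sub_sub_sub_cancel_left, ← sub_div, abs_div, abs_of_pos hδ]
  refine div_le_div_of_nonneg_right ?_ hδ.le
  rw [abs_sub_comm]
  exact (abs_dist_sub_le _ _ _).trans (UnitAddCircle.dist_coe_le x y)

end Tent

theorem exists_isTimedAutomorphism_eq_add {F : Set ℝ} (hF : F.Finite)
    (hinj : InjOn ((↑) : ℝ → UnitAddCircle) F) :
    ∃ ε > 0, ∀ c : ℝ → ℝ, (∀ p ∈ F, |c p| ≤ ε) →
      ∃ τ, IsTimedAutomorphism τ ∧ ∀ p ∈ F, τ p = p + c p := by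
  obtain ⟨δ, hδ, hsep⟩ := exists_pos_le_dist_of_finite (hF.image ((↑) : ℝ → UnitAddCircle))
  set N := hF.toFinset
  set ε := δ / (2 * (N.card + 1)) with hε_def
  have hε : 0 < ε := by positivity
  refine ⟨ε, hε, fun c hc => ?_⟩
  set d : ℝ → ℝ := fun x => ∑ p ∈ N, c p * tent δ p x
  have hd : ContractingWith 2⁻¹ d := by
    refine ⟨by norm_num, LipschitzWith.of_dist_le_mul fun x y => ?_⟩
    simp only [Real.dist_eq, d, ← Finset.sum_sub_distrib, ← mul_sub]
    calc |∑ p ∈ N, c p * (tent δ p x - tent δ p y)|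
        ≤ ∑ p ∈ N, ε * (|x - y| / δ) := (Finset.abs_sum_le_sum_abs _ _).trans <|
          Finset.sum_le_sum fun p hp => by
            rw [abs_mul]
            exact mul_le_mul (hc p (hF.mem_toFinset.1 hp)) (abs_tent_sub_tent_le p hδ x y)
              (abs_nonneg _) hε.le
      _ = N.card / (2 * (N.card + 1)) * |x - y| := by
          rw [Finset.sum_const, nsmul_eq_mul, hε_def]
          field_simp
      _ ≤ _ := by
          gcongr
          rw [div_le_iff₀ (by positivity)]
          push_cast
          linarith
  refine ⟨_, isTimedAutomorphism_id_add hd fun x => by simp only [d, tent_add_one], fun q hq => ?_⟩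
  simp only [d]
  rw [Finset.sum_eq_single q (fun p hp hpq => ?_) (fun h => (h (hF.mem_toFinset.2 hq)).elim),
    tent_self, mul_one]
  rw [tent_eq_zero p hδ, mul_zero]
  exact hsep _ (mem_image_of_mem _ hq) _ (mem_image_of_mem _ (hF.mem_toFinset.1 hp))
    fun h => hpq (hinj (hF.mem_toFinset.1 hp) hq h.symm)

theorem exists_comp_eq_of_abs_sub_le {S S' : Set ℝ} (hS : S.Finite) (hS' : S'.Finite) :
    ∃ ε > 0, ∀ g, IsSTimedAutomorphism (Int.fract '' S ∩ Int.fract '' S') g →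
      (∀ x, |g x - x| ≤ ε) → ∃ σ τ, IsSTimedAutomorphism S σ ∧ IsSTimedAutomorphism S' τ ∧
        τ ∘ σ = g ∧ (σ 0 = 0 ∨ τ 0 = 0) := by
  classical
  set F := insert 0 (Int.fract '' S ∪ Int.fract '' S')
  have hFfin : F.Finite := ((hS.image _).union (hS'.image _)).insert 0
  have hF : F ⊆ Ico 0 1 := by
    rintro _ (rfl | ⟨s, -, rfl⟩ | ⟨s, -, rfl⟩) <;>
      simp [Int.fract_nonneg, Int.fract_lt_one]
  obtain ⟨ε, hε, hext⟩ :=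
    exists_isTimedAutomorphism_eq_add hFfin (injOn_coe_unitAddCircle_of_subset_Ico hF)
  refine ⟨ε, hε, fun g hg hgε => ?_⟩
  obtain ⟨τ, hτ, hτF⟩ := hext (fun p => if p ∈ Int.fract '' S then g p - p else 0)
    fun p _ => by split_ifs <;> simp [hgε, hε.le]
  have hτS : ∀ p ∈ Int.fract '' S, τ p = g p := fun p hp => by
    rw [hτF p (Or.inr (Or.inl hp)), if_pos hp]
    ring
  have hτS' : ∀ p ∉ Int.fract '' S, p ∈ F → τ p = p := fun p hp hpF => by
    rw [hτF p hpF, if_neg hp, add_zero]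
  have hσ : IsSTimedAutomorphism (Int.fract '' S) (hτ.toOrderIso.symm ∘ g) :=
    ⟨hτ.symm.comp hg.1, fun p hp => by
      rw [comp_apply, OrderIso.symm_apply_eq, IsTimedAutomorphism.coe_toOrderIso, hτS p hp]⟩
  refine ⟨_, τ, isSTimedAutomorphism_fract_image_iff.1 hσ, ?_, ?_, ?_⟩
  · refine isSTimedAutomorphism_fract_image_iff.1 ⟨hτ, fun p hp => ?_⟩
    by_cases hpS : p ∈ Int.fract '' S
    · rw [hτS p hpS, hg.2 p ⟨hpS, hp⟩]
    · exact hτS' p hpS (Or.inr (Or.inr hp))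
  · exact funext fun x => hτ.toOrderIso.apply_symm_apply (g x)
  · by_cases h0 : (0 : ℝ) ∈ Int.fract '' S
    · exact Or.inl (hσ.2 0 h0)
    · exact Or.inr (hτS' 0 h0 (mem_insert 0 _))

theorem invariance_of_fract_intersection_general
    {A : Type*} (S S' : Set ℝ) (hS : S.Finite) (hS' : S'.Finite)
    (L : Set (List (A × ℝ)))
    (h1 : SInvariantLang S L) (h2 : SInvariantLang S' L) :
    SInvariantLang (Int.fract '' S ∩ Int.fract '' S') L := by
  obtain ⟨ε, hε, hsplit⟩ := exists_comp_eq_of_abs_sub_le hS hS'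
  refine LocallySInvariantLang.sInvariantLang (fun g hg hgε u hu hgu => ?_) hε
  obtain ⟨σ, τ, hσ, hτ, rfl, h0⟩ := hsplit g hg hgε
  exact h1.mem_iff_mem_mapTW_comp h2 hσ hτ h0 hu hgu

/-- If a timed language is both `S`-invariant and `S'`-invariant for finite
`S, S' ⊆ ℝ≥0`, then it is `S''`-invariant where `S'' = frac(S) ∩ frac(S')`. -/
theorem invariance_of_fract_intersection
    {A : Type*} (S S' : Set ℝ) (hS : S.Finite) (hS' : S'.Finite)
    (hSpos : ∀ t ∈ S, 0 ≤ t) (hS'pos : ∀ t ∈ S', 0 ≤ t)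
    (L : Set (List (A × ℝ))) (hL : ∀ w ∈ L, IsTimedWord w)
    (h1 : SInvariantLang S L) (h2 : SInvariantLang S' L) :
    SInvariantLang (Int.fract '' S ∩ Int.fract '' S') L :=
  invariance_of_fract_intersection_general S S' hS hS' L h1 h2
end

section
/- (Invariance of the transition system of a timed automaton.) Let A be a timed automaton using the reset-point semantics, where a configuration is (p, μ, now) with μ : X → ℝ≥0 a reset-point assignment with μ(x) ≤ now, and there is a transition (p, μ, now) →(a,t) (q, ν, t) whenever t ≥ now, the valuation x ↦ t − μ(x) satisfies the transition rule's clock constraint (a Boolean combination of comparisons of clock values and differences to integers), and ν agrees with t on reset clocks Y and with μ elsewhere. Then for every timed automorphism π: (p, μ, now) →(a,t) (q, ν, t) if and only if (p, π∘μ, π(now)) →(a,π(t)) (q, π∘ν, π(t)). -/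
/-- Comparison operators appearing in clock constraints. -/
inductive CmpOp where
  | lt | le | eq | ge | gt

def CmpOp.holds : CmpOp → ℝ → ℝ → Prop
  | .lt, a, b => a < b
  | .le, a, b => a ≤ b
  | .eq, a, b => a = b
  | .ge, a, b => a ≥ b
  | .gt, a, b => a > b

/-- Clock constraints: Boolean combinations of comparisons of clock values and of
differences of clock values with integer constants. -/
inductive ClockConstraint (X : Type*) where
  | tt : ClockConstraint X
  | ff : ClockConstraint X
  | diff : X → X → CmpOp → ℤ → ClockConstraint X
  | single : X → CmpOp → ℤ → ClockConstraint X
  | not : ClockConstraint X → ClockConstraint X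
  | and : ClockConstraint X → ClockConstraint X → ClockConstraint X
  | or : ClockConstraint X → ClockConstraint X → ClockConstraint X

/-- Satisfaction of a clock constraint by a clock valuation `ν : X → ℝ`. -/
def ClockConstraint.sat {X : Type*} (ν : X → ℝ) : ClockConstraint X → Prop
  | .tt => True
  | .ff => False
  | .diff x y c z => CmpOp.holds c (ν x - ν y) (z : ℝ)
  | .single x c z => CmpOp.holds c (ν x) (z : ℝ)
  | .not φ => ¬ ClockConstraint.sat ν φ
  | .and φ ψ => ClockConstraint.sat ν φ ∧ ClockConstraint.sat ν ψ
  | .or φ ψ => ClockConstraint.sat ν φ ∨ ClockConstraint.sat ν ψ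

/-- All integer constants of the constraint have absolute value at most `m`. -/
def ClockConstraint.constBounded {X : Type*} (m : ℕ) : ClockConstraint X → Prop
  | .tt => True
  | .ff => True
  | .diff _ _ _ z => z.natAbs ≤ m
  | .single _ _ z => z.natAbs ≤ m
  | .not φ => ClockConstraint.constBounded m φ
  | .and φ ψ => ClockConstraint.constBounded m φ ∧ ClockConstraint.constBounded m ψ
  | .or φ ψ => ClockConstraint.constBounded m φ ∧ ClockConstraint.constBounded m ψ

/-- A (nondeterministic) timed automaton over alphabet `A`, locations `Q`, clocks `X`.
A rule `(p, a, φ, Y, q)` reads letter `a` in location `p`, tests guard `φ`, resets the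
clocks in `Y` and moves to location `q`. -/
structure TimedAutomaton (A Q X : Type*) where
  init : Set Q
  final : Set Q
  rules : Set (Q × A × ClockConstraint X × Set X × Q)

/-- A configuration in the reset-point semantics: a location, a reset-point
assignment for the clocks, and the current timestamp. -/
abbrev TAConfig (Q X : Type*) := Q × (X → ℝ) × ℝ

/-- One transition of the reset-point semantics: at time `t ≥ now`, the guard of some
rule is satisfied by the valuation `x ↦ t - μ x`; clocks in the reset set get reset
point `t`, the others keep their reset points. -/
def TimedAutomaton.Step {A Q X : Type*} (Aut : TimedAutomaton A Q X)
    (c : TAConfig Q X) (e : A × ℝ) (c' : TAConfig Q X) : Prop :=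
  c'.2.2 = e.2 ∧ c.2.2 ≤ e.2 ∧
  ∃ φ Y, (c.1, e.1, φ, Y, c'.1) ∈ Aut.rules ∧
    ClockConstraint.sat (fun x => e.2 - c.2.1 x) φ ∧
    (∀ x ∈ Y, c'.2.1 x = e.2) ∧ (∀ x ∉ Y, c'.2.1 x = c.2.1 x)

/-- Runs of a timed automaton over a timed word. -/
inductive TimedAutomaton.Run {A Q X : Type*} (Aut : TimedAutomaton A Q X) :
    TAConfig Q X → List (A × ℝ) → TAConfig Q X → Prop
  | nil (c : TAConfig Q X) : Aut.Run c [] c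
  | cons {c c' c'' : TAConfig Q X} {e : A × ℝ} {w : List (A × ℝ)} :
      Aut.Step c e c' → Aut.Run c' w c'' → Aut.Run c (e :: w) c''

/-- Language of a configuration: timed words admitting an accepting run from it. -/
def TimedAutomaton.LangFrom {A Q X : Type*} (Aut : TimedAutomaton A Q X)
    (c : TAConfig Q X) : Set (List (A × ℝ)) :=
  {w | ∃ c', Aut.Run c w c' ∧ c'.1 ∈ Aut.final}

/-- Language of a timed automaton: union over initial configurations. -/
def TimedAutomaton.Lang {A Q X : Type*} (Aut : TimedAutomaton A Q X) :
    Set (List (A × ℝ)) :=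
  {w | ∃ p ∈ Aut.init, w ∈ Aut.LangFrom (p, fun _ => 0, 0)}

/-- A configuration is reachable if some run from an initial configuration ends in it. -/
def TimedAutomaton.Reachable {A Q X : Type*} (Aut : TimedAutomaton A Q X)
    (c : TAConfig Q X) : Prop :=
  ∃ p ∈ Aut.init, ∃ w, Aut.Run (p, fun _ => 0, 0) w c

/-- Determinism: unique initial location, and two rules from the same location on the
same letter with jointly satisfiable guards agree on resets and target. -/
def TimedAutomaton.IsDeterministic {A Q X : Type*} (Aut : TimedAutomaton A Q X) : Prop :=
  (∃! p, p ∈ Aut.init) ∧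
  ∀ p a φ Y q φ' Y' q', (p, a, φ, Y, q) ∈ Aut.rules → (p, a, φ', Y', q') ∈ Aut.rules →
    (∃ ν : X → ℝ, ClockConstraint.sat ν φ ∧ ClockConstraint.sat ν φ') →
    Y = Y' ∧ q = q'

/-!
A timed automorphism `π` is strictly monotone and commutes with integer translations, so
`π u - π v ∼ z ↔ u - v ∼ z` for every integer `z`. In the reset-point semantics every atom of a
guard is such a comparison: clock values are `t - μ x` and clock differences are `μ y - μ x`.
The remaining conditions of a step, `now ≤ t` and the reset equations, are preserved and
reflected because `π` is a strictly monotone injection.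
-/

theorem CmpOp.holds_sub_iff (c : CmpOp) (a b d : ℝ) : c.holds (a - b) d ↔ c.holds a (b + d) := by
  cases c
  exacts [sub_lt_iff_lt_add', sub_le_iff_le_add', sub_eq_iff_eq_add', le_sub_iff_add_le',
    lt_sub_iff_add_lt']

theorem CmpOp.holds_map_iff {f : ℝ → ℝ} (hf : StrictMono f) (c : CmpOp) (a b : ℝ) :
    c.holds (f a) (f b) ↔ c.holds a b := by
  cases c <;>
    simp only [CmpOp.holds, ge_iff_le, gt_iff_lt, hf.le_iff_le, hf.lt_iff_lt, hf.injective.eq_iff]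

namespace IsTimedAutomorphism

variable {π : ℝ → ℝ}

theorem strictMono (hπ : IsTimedAutomorphism π) : StrictMono π := hπ.2.1

def toCircleDeg1Lift (hπ : IsTimedAutomorphism π) : CircleDeg1Lift where
  toFun := π
  monotone' := hπ.strictMono.monotone
  map_add_one' := hπ.2.2

theorem map_add_int (hπ : IsTimedAutomorphism π) (x : ℝ) (z : ℤ) : π (x + z) = π x + z :=
  hπ.toCircleDeg1Lift.map_add_int x z

theorem holds_map_sub_map_iff (hπ : IsTimedAutomorphism π) (c : CmpOp) (u v : ℝ) (z : ℤ) :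
    c.holds (π u - π v) z ↔ c.holds (u - v) z := by
  rw [CmpOp.holds_sub_iff, CmpOp.holds_sub_iff, ← hπ.map_add_int, CmpOp.holds_map_iff hπ.strictMono]

theorem sat_map_sub_map_iff (hπ : IsTimedAutomorphism π) {X : Type*} (t : ℝ) (μ : X → ℝ)
    (φ : ClockConstraint X) :
    φ.sat (fun x => π t - π (μ x)) ↔ φ.sat (fun x => t - μ x) := by
  induction φ with
  | tt | ff => rfl
  | diff x y c z =>
    simp only [ClockConstraint.sat, sub_sub_sub_cancel_left]
    exact hπ.holds_map_sub_map_iff c (μ y) (μ x) z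
  | single x c z => exact hπ.holds_map_sub_map_iff c t (μ x) z
  | not φ ih => exact not_congr ih
  | and φ ψ ihφ ihψ => exact and_congr ihφ ihψ
  | or φ ψ ihφ ihψ => exact or_congr ihφ ihψ

end IsTimedAutomorphism

/-- Invariance of the transition system of a timed automaton: a timed automorphism
maps transitions to transitions, and conversely. -/
theorem step_invariant_under_timed_automorphism
    {A Q X : Type*} (Aut : TimedAutomaton A Q X)
    (π : ℝ → ℝ) (hπ : IsTimedAutomorphism π)
    (p q : Q) (μ ν : X → ℝ) (now t : ℝ) (a : A) :
    Aut.Step (p, μ, now) (a, t) (q, ν, t) ↔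
      Aut.Step (p, π ∘ μ, π now) (a, π t) (q, π ∘ ν, π t) := by
  simp only [TimedAutomaton.Step, Function.comp_apply, hπ.strictMono.le_iff_le,
    hπ.strictMono.injective.eq_iff, hπ.sat_map_sub_map_iff]
end
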